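/- Let Ξ > 0 and set t = Ξ/(1+Ξ). Let β_f, β_m satisfy 0 ≤ β_f < t < β_m ≤ 1, and let π_f ∈ [0,1] be fixed. Then there exist thresholds ᾱ ∈ (0,1) and π̄ ∈ (0,1) such that for every α ∈ [ᾱ,1] and every π_m ∈ [π̄,1], one has π_f·(1−α)·(t − β_f) + π_m·α·(t − β_m) < 0. -/
import Mathlib

lemma aux_key (A B πf α πm : ℝ) (hApos : 0 < A) (hBpos : 0 < B)
    (hπf0 : 0 ≤ πf) (hπf1 : πf ≤ 1)
    (hα1 : 4 * A / (4 * A + B) ≤ α) (hα2 : α ≤ 1)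
    (hπm1 : (1:ℝ)/2 ≤ πm) (hπm2 : πm ≤ 1) :
    πf * (1 - α) * A - πm * α * B < 0 := by
  have hden : 0 < 4 * A + B := by linarith
  have hαb' : 4 * A ≤ α * (4 * A + B) := by
    rw [div_le_iff₀ hden] at hα1; linarith
  have hαpos : 0 < α := lt_of_lt_of_le (by positivity) hα1
  have h1 : πf * (1 - α) * A ≤ (1 - α) * A := by
    nlinarith [mul_nonneg (mul_nonneg (by linarith : (0:ℝ) ≤ 1 - πf) (by linarith : (0:ℝ) ≤ 1 - α)) hApos.le]
  have h2 : (1/2) * α * B ≤ πm * α * B := by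
    nlinarith [mul_nonneg (mul_nonneg (by linarith : (0:ℝ) ≤ πm - 1/2) hαpos.le) hBpos.le]
  have h3 : (1 - α) * A < (1/2) * α * B := by nlinarith
  linarith

/-- Sufficiency direction of Proposition 1: with `t = Ξ/(1+Ξ)` and
`0 ≤ β_f < t < β_m ≤ 1`, for fixed `π_f ∈ [0,1]` there are thresholds
`ᾱ, π̄ ∈ (0,1)` such that for all `α ∈ [ᾱ,1]` and `π_m ∈ [π̄,1]`,
`π_f(1−α)(t−β_f) + π_m α (t−β_m) < 0`. -/
theorem stmt_1 (Ξ βf βm πf : ℝ) (hΞ : 0 < Ξ)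
    (hβf0 : 0 ≤ βf) (hβft : βf < Ξ / (1 + Ξ)) (htβm : Ξ / (1 + Ξ) < βm) (hβm1 : βm ≤ 1)
    (hπf : πf ∈ Set.Icc (0 : ℝ) 1) :
    ∃ αbar ∈ Set.Ioo (0 : ℝ) 1, ∃ πbar ∈ Set.Ioo (0 : ℝ) 1,
      ∀ α ∈ Set.Icc αbar 1, ∀ πm ∈ Set.Icc πbar 1,
        πf * (1 - α) * (Ξ / (1 + Ξ) - βf) + πm * α * (Ξ / (1 + Ξ) - βm) < 0 := by
  obtain ⟨hπf0, hπf1⟩ := hπf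
  have hApos : 0 < Ξ / (1 + Ξ) - βf := by linarith
  have hBpos : 0 < βm - Ξ / (1 + Ξ) := by linarith
  set A := Ξ / (1 + Ξ) - βf with hA
  set B := βm - Ξ / (1 + Ξ) with hB
  have hden : 0 < 4 * A + B := by linarith
  refine ⟨4 * A / (4 * A + B), ⟨by positivity, by
    rw [div_lt_one hden]; linarith⟩, 1/2, ⟨by norm_num, by norm_num⟩, ?_⟩
  rintro α ⟨hα1, hα2⟩ πm ⟨hπm1, hπm2⟩
  have key := aux_key A B πf α πm hApos hBpos hπf0 hπf1 hα1 hα2 hπm1 hπm2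
  have heq : πf * (1 - α) * (Ξ / (1 + Ξ) - βf) + πm * α * (Ξ / (1 + Ξ) - βm) =
      πf * (1 - α) * A - πm * α * B := by rw [hA, hB]; ring
  rw [heq]; exact key
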